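/- arXiv:1910.07990 — 3 statements merged into one kernel-verified Lean document; each statement's English description precedes it below -/
import Mathlib

section
/- Let L, c, R, f_l, f_e be positive real numbers and define the relaxed latency function D̂(ℓ) = max{ (L − ℓ)·c / f_l , ℓ/R + ℓ·c/f_e } for ℓ ∈ [0, L]. Then D̂ attains its minimum over [0, L] at ℓ̂* = L·c·R·f_e / ( f_e·f_l + c·R·(f_e + f_l) ); that is, ℓ̂* ∈ [0, L] and for every ℓ ∈ [0, L], D̂(ℓ̂*) ≤ D̂(ℓ). -/
/-- Proposition 1 (relaxed version): the relaxed latency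
`D̂(ℓ) = max{(L−ℓ)c/f_l, ℓ/R + ℓc/f_e}` attains its minimum over `[0, L]` at
`ℓ̂* = L c R f_e / (f_e f_l + c R (f_e + f_l))`. -/
theorem relaxed_offloading_volume_optimal
    (L c R fl fe : ℝ) (hL : 0 < L) (hc : 0 < c) (hR : 0 < R)
    (hfl : 0 < fl) (hfe : 0 < fe) :
    let D : ℝ → ℝ := fun ℓ => max ((L - ℓ) * c / fl) (ℓ / R + ℓ * c / fe)
    let ℓstar : ℝ := L * c * R * fe / (fe * fl + c * R * (fe + fl))
    ℓstar ∈ Set.Icc (0 : ℝ) L ∧ ∀ ℓ ∈ Set.Icc (0 : ℝ) L, D ℓstar ≤ D ℓ := by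
  intro D ℓstar
  have hK : 0 < fe * fl + c * R * (fe + fl) := by positivity
  have hℓ0 : 0 ≤ ℓstar := by positivity
  have hℓL : ℓstar ≤ L := by
    rw [div_le_iff₀ hK]
    nlinarith [mul_pos hfe hfl, mul_pos hc hR, mul_pos (mul_pos hc hR) hfl]
  have heq : (L - ℓstar) * c / fl = ℓstar / R + ℓstar * c / fe := by
    simp only [ℓstar]
    field_simp
    ring
  refine ⟨⟨hℓ0, hℓL⟩, ?_⟩
  intro ℓ hℓ
  rcases le_total ℓ ℓstar with h | h
  · calc D ℓstar ≤ (L - ℓstar) * c / fl := by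
          simp only [D, heq, max_self, le_refl]
      _ ≤ (L - ℓ) * c / fl := by
          gcongr
      _ ≤ D ℓ := le_max_left _ _
  · calc D ℓstar ≤ ℓstar / R + ℓstar * c / fe := by
          simp only [D, heq, max_self, le_refl]
      _ ≤ ℓ / R + ℓ * c / fe := by
          gcongr
      _ ≤ D ℓ := le_max_right _ _
end

section
/- Let K ≥ 1 and, for each k ∈ {1,…,K}, let ϖ_k, L_k, c_k, R_k, f_k^l be positive real numbers. Then the function F : ℝ^K → ℝ defined by F(f) = Σ_{k=1}^K ϖ_k·(L_k·c_k²·R_k + L_k·c_k·f_k) / ( f_k·f_k^l + c_k·R_k·(f_k + f_k^l) ) is convex on the nonnegative orthant { f ∈ ℝ^K : f_k ≥ 0 for all k }. -/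
/-!
Each summand depends on a single coordinate `f k` and is a linear-fractional function
`(a + b x) / (d x + e)` with `d, e > 0`. Such a function equals
`b / d + (a d - b e) / (d (d x + e))`, hence is a nonnegative multiple of the convex function
`x ↦ (d x + e)⁻¹` plus a constant as soon as `b e ≤ a d`; for the latency this reduces to
`0 ≤ ϖ L c³ R²`. A sum of convex functions of the coordinates is convex on the orthant.
-/

open Set

theorem convexOn_finset_sum {𝕜 E β ι : Type*} [Semiring 𝕜] [PartialOrder 𝕜]
    [AddCommMonoid E] [AddCommMonoid β] [PartialOrder β] [IsOrderedAddMonoid β]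
    [SMul 𝕜 E] [Module 𝕜 β] {s : Set E} {t : Finset ι} {f : ι → E → β}
    (hs : Convex 𝕜 s) (hf : ∀ i ∈ t, ConvexOn 𝕜 s (f i)) :
    ConvexOn 𝕜 s fun x => ∑ i ∈ t, f i x := by
  classical
  induction t using Finset.induction_on with
  | empty => simpa using convexOn_const (0 : β) hs
  | insert a t ha ih =>
    simp only [Finset.sum_insert ha]
    exact (hf a (Finset.mem_insert_self a t)).add
      (ih fun i hi => hf i (Finset.mem_insert_of_mem hi))

theorem convexOn_inv_affine {d e : ℝ} :
    ConvexOn ℝ {x | 0 < d * x + e} fun x => (d * x + e)⁻¹ := by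
  let g : ℝ →ᵃ[ℝ] ℝ := (d • LinearMap.id : ℝ →ₗ[ℝ] ℝ).toAffineMap + AffineMap.const ℝ ℝ e
  have hg : ∀ x, g x = d * x + e := fun x => by simp [g]
  have hpre : g ⁻¹' Ioi 0 = {x | 0 < d * x + e} := by ext x; simp [hg]
  simpa [hpre, Function.comp_def, hg] using (convexOn_zpow (𝕜 := ℝ) (-1)).comp_affineMap g

theorem convexOn_div_affine {a b d e : ℝ} (hd : 0 < d) (hbe : b * e ≤ a * d) :
    ConvexOn ℝ {x | 0 < d * x + e} fun x => (a + b * x) / (d * x + e) := by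
  have hcoef : 0 ≤ (a * d - b * e) / d := div_nonneg (sub_nonneg.2 hbe) hd.le
  refine ((convexOn_inv_affine.smul hcoef).add_const (b / d)).congr fun x hx => ?_
  have hx0 : d * x + e ≠ 0 := (show 0 < d * x + e from hx).ne'
  simp only [Pi.add_apply, smul_eq_mul]
  field_simp
  ring

theorem convexOn_latency {w L c R fl : ℝ} (hw : 0 ≤ w) (hL : 0 ≤ L) (hc : 0 < c)
    (hR : 0 < R) (hfl : 0 < fl) :
    ConvexOn ℝ (Ici 0) fun x => w * (L * c ^ 2 * R + L * c * x) / (x * fl + c * R * (x + fl)) := by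
  have hbe : w * L * c * (c * R * fl) ≤ w * L * c ^ 2 * R * (fl + c * R) := by
    have : w * L * c ^ 2 * R * (fl + c * R) - w * L * c * (c * R * fl)
        = w * L * c ^ 3 * R ^ 2 := by ring
    linarith [show 0 ≤ w * L * c ^ 3 * R ^ 2 by positivity]
  have hsub : Ici 0 ⊆ {x : ℝ | 0 < (fl + c * R) * x + c * R * fl} := fun x (hx : 0 ≤ x) => by
    show 0 < (fl + c * R) * x + c * R * fl
    positivity
  refine ((convexOn_div_affine (by positivity) hbe).subset hsub (convex_Ici 0)).congr
    fun x _ => ?_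
  ring

theorem problem_P1E_convex_general
    (K : ℕ) (ϖ L c R fl : Fin K → ℝ)
    (hϖ : ∀ k, 0 < ϖ k) (hL : ∀ k, 0 < L k) (hc : ∀ k, 0 < c k)
    (hR : ∀ k, 0 < R k) (hfl : ∀ k, 0 < fl k) :
    ConvexOn ℝ {f : Fin K → ℝ | ∀ k, 0 ≤ f k}
      (fun f : Fin K → ℝ => ∑ k, ϖ k * (L k * (c k) ^ 2 * R k + L k * c k * f k) /
        (f k * fl k + c k * R k * (f k + fl k))) := by
  have hS : Convex ℝ {f : Fin K → ℝ | ∀ k, 0 ≤ f k} := convex_Ici (0 : Fin K → ℝ)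
  refine convexOn_finset_sum hS fun k _ => ?_
  have hk := (convexOn_latency (hϖ k).le (hL k).le (hc k) (hR k) (hfl k)).comp_linearMap
    (LinearMap.proj (R := ℝ) (φ := fun _ : Fin K => ℝ) k)
  exact hk.subset (fun f hf => hf k) hS

/-- Proposition 2: the objective of Problem P1-E is convex on the
nonnegative orthant. -/
theorem problem_P1E_convex
    (K : ℕ) (hK : 1 ≤ K) (ϖ L c R fl : Fin K → ℝ)
    (hϖ : ∀ k, 0 < ϖ k) (hL : ∀ k, 0 < L k) (hc : ∀ k, 0 < c k)
    (hR : ∀ k, 0 < R k) (hfl : ∀ k, 0 < fl k) :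
    ConvexOn ℝ {f : Fin K → ℝ | ∀ k, 0 ≤ f k}
      (fun f : Fin K → ℝ => ∑ k, ϖ k * (L k * (c k) ^ 2 * R k + L k * c k * f k) /
        (f k * fl k + c k * R k * (f k + fl k))) :=
  problem_P1E_convex_general K ϖ L c R fl hϖ hL hc hR hfl
end

section
/- Let ϖ, L, c, R, f_l be positive real numbers and define g(f) = ϖ·(L·c²·R + L·c·f) / ( f·f_l + c·R·(f + f_l) ) for f ≥ 0. Then the second derivative of g at any f ≥ 0 equals Φ(f) = 2·ϖ·L·c³·R²·(f_l + c·R) / ( f·f_l + c·R·(f + f_l) )³, and Φ(f) ≥ 0 for all f ≥ 0. -/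
/-!
Writing the denominator as `(f_l + c R) x + c R f_l`, the function is the linear fractional map
`x ↦ (a + b x) / (p x + q)` with `a = ϖ L c² R`, `b = ϖ L c`, `p = f_l + c R`, `q = c R f_l`.
Its second derivative is `-2 p (b q - a p) / (p x + q)³`, and here `b q - a p = -ϖ L c³ R²`.
For `x ≥ 0` the denominator is positive, whence the sign.
-/

open Topology

section LinearFractional

variable {𝕜 : Type*} [NontriviallyNormedField 𝕜] (a b p q : 𝕜) {x : 𝕜}

theorem hasDerivAt_linear_div_linear (hx : p * x + q ≠ 0) :
    HasDerivAt (fun y => (a + b * y) / (p * y + q)) ((b * q - a * p) / (p * x + q) ^ 2) x := by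
  have hnum : HasDerivAt (fun y => a + b * y) b x := by
    simpa using ((hasDerivAt_id x).const_mul b).const_add a
  have hden : HasDerivAt (fun y => p * y + q) p x := by
    simpa using ((hasDerivAt_id x).const_mul p).add_const q
  exact (hnum.fun_div hden hx).congr_deriv (by ring)

theorem hasDerivAt_const_div_linear_sq (k : 𝕜) (hx : p * x + q ≠ 0) :
    HasDerivAt (fun y => k / (p * y + q) ^ 2) (-2 * p * k / (p * x + q) ^ 3) x := by
  have hden : HasDerivAt (fun y => (p * y + q) ^ 2) (2 * (p * x + q) * p) x := by
    simpa using (((hasDerivAt_id x).const_mul p).add_const q).fun_pow 2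
  exact ((hasDerivAt_const x k).fun_div hden (pow_ne_zero 2 hx)).congr_deriv
    (by field_simp; ring)

theorem deriv_deriv_linear_div_linear (hx : p * x + q ≠ 0) :
    deriv (deriv fun y => (a + b * y) / (p * y + q)) x
      = -2 * p * (b * q - a * p) / (p * x + q) ^ 3 := by
  have hopen : IsOpen {y : 𝕜 | p * y + q ≠ 0} :=
    isOpen_ne_fun (by fun_prop) continuous_const
  have hderiv : deriv (fun y => (a + b * y) / (p * y + q))
      =ᶠ[𝓝 x] fun y => (b * q - a * p) / (p * y + q) ^ 2 := by
    filter_upwards [hopen.mem_nhds hx] with y hy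
    exact (hasDerivAt_linear_div_linear a b p q hy).deriv
  rw [hderiv.deriv_eq]
  exact (hasDerivAt_const_div_linear_sq p q _ hx).deriv

end LinearFractional

/-- Appendix B: the second derivative of a single device's contribution to
the objective of Problem P1-E, and its nonnegativity. -/
theorem second_derivative_P1E
    (ϖ L c R fl : ℝ) (hϖ : 0 < ϖ) (hL : 0 < L) (hc : 0 < c)
    (hR : 0 < R) (hfl : 0 < fl) :
    ∀ f : ℝ, 0 ≤ f →
      deriv (deriv (fun x : ℝ => ϖ * (L * c ^ 2 * R + L * c * x) /
          (x * fl + c * R * (x + fl)))) f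
        = 2 * ϖ * L * c ^ 3 * R ^ 2 * (fl + c * R) /
            (f * fl + c * R * (f + fl)) ^ 3 ∧
      0 ≤ 2 * ϖ * L * c ^ 3 * R ^ 2 * (fl + c * R) /
            (f * fl + c * R * (f + fl)) ^ 3 := by
  intro f hf
  have hfun : (fun x : ℝ => ϖ * (L * c ^ 2 * R + L * c * x) / (x * fl + c * R * (x + fl)))
      = fun x => (ϖ * L * c ^ 2 * R + ϖ * L * c * x) / ((fl + c * R) * x + c * R * fl) := by
    funext x
    ring
  have hden : (fl + c * R) * f + c * R * fl ≠ 0 := by positivity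
  refine ⟨?_, by positivity⟩
  rw [hfun, deriv_deriv_linear_div_linear _ _ _ _ hden]
  ring
end
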